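/- Let 0 < J < 1 and let 0 < P < Q satisfy (1+J)(Q−P) = log Q − log P and Q > 1/(1−J). Then 1/P − 1 > 3J; equivalently, P < 1/(1+3J). -/

import Mathlib

/-!
On the level set `(1 + J) x - log x = w` of this convex function, `P` is the smaller point, left
of the minimum `1 / (1 + J)`. Since `Q > 1 / (1 - J)`, the level `w` exceeds the value at
`1 / (1 - J)`, and that value exceeds the value at `1 / (1 + 3J)` (the bound `log x < sinh (log x)`
applied at `1 + 3J` and `1 / (1 - J)` leaves a margin of `6J³ / ((1 - J)(1 + 3J))`). On the
decreasing branch this forces `P < 1 / (1 + 3J)`.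
-/

open Real Set

theorem log_sub_log_lt_div {x y : ℝ} (hx : 0 < x) (hxy : x < y) :
    log y - log x < (y - x) / x := by
  have h := log_lt_sub_one_of_pos (div_pos (hx.trans hxy) hx) ((one_lt_div hx).2 hxy).ne'
  rw [log_div (hx.trans hxy).ne' hx.ne'] at h
  rwa [sub_div, div_self hx.ne']

theorem div_lt_log_sub_log {x y : ℝ} (hx : 0 < x) (hxy : x < y) :
    (y - x) / y < log y - log x := by
  have hy : 0 < y := hx.trans hxy
  have h := log_lt_sub_one_of_pos (div_pos hx hy) ((div_lt_one hy).2 hxy).ne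
  rw [log_div hx.ne' hy.ne'] at h
  rw [sub_div, div_self hy.ne']
  linarith

theorem strictMonoOn_mul_sub_log {c : ℝ} (hc : 0 < c) :
    StrictMonoOn (fun x => c * x - log x) (Ici c⁻¹) := by
  intro x hx y _ hxy
  have hx0 : 0 < x := (inv_pos.2 hc).trans_le hx
  have hxc : x⁻¹ ≤ c := inv_le_of_inv_le₀ hc hx
  have := log_sub_log_lt_div hx0 hxy
  rw [div_eq_mul_inv] at this
  nlinarith [sub_pos.2 hxy]

theorem strictAntiOn_mul_sub_log (c : ℝ) :
    StrictAntiOn (fun x => c * x - log x) (Ioc 0 c⁻¹) := by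
  intro x hx y hy hxy
  have hy0 : 0 < y := hx.1.trans hxy
  have hyc : c ≤ y⁻¹ := le_inv_of_le_inv₀ hy0 hy.2
  have := div_lt_log_sub_log hx.1 hxy
  rw [div_eq_mul_inv] at this
  nlinarith [sub_pos.2 hxy]

theorem log_lt_sub_inv_div_two {x : ℝ} (hx : 1 < x) : log x < (x - x⁻¹) / 2 := by
  rw [← sinh_log (zero_lt_one.trans hx)]
  exact self_lt_sinh_iff.2 (log_pos hx)

theorem log_one_add_three_mul_sub_log_one_sub_lt {J : ℝ} (hJ0 : 0 < J) (hJ1 : J < 1) :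
    log (1 + 3 * J) - log (1 - J) < (1 + J) * ((1 - J)⁻¹ - (1 + 3 * J)⁻¹) := by
  have hJ' : 0 < 1 - J := by linarith
  have h₁ := log_lt_sub_inv_div_two (by linarith : 1 < 1 + 3 * J)
  have h₂ := log_lt_sub_inv_div_two (one_lt_inv₀ hJ' |>.2 (by linarith))
  rw [log_inv, inv_inv] at h₂
  have hgap : (1 + J) * ((1 - J)⁻¹ - (1 + 3 * J)⁻¹)
      - ((1 + 3 * J - (1 + 3 * J)⁻¹) / 2 + ((1 - J)⁻¹ - (1 - J)) / 2)
      = 6 * J ^ 3 / ((1 - J) * (1 + 3 * J)) := by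
    field_simp
    ring
  have : 0 < 6 * J ^ 3 / ((1 - J) * (1 + 3 * J)) := by positivity
  linarith

theorem stmt_17 (J P Q : ℝ) (hJ0 : 0 < J) (hJ1 : J < 1)
    (hP : 0 < P) (hPQ : P < Q)
    (h : (1 + J) * (Q - P) = Real.log Q - Real.log P)
    (hQ : 1 / (1 - J) < Q) :
    3 * J < 1 / P - 1 ∧ P < 1 / (1 + 3 * J) := by
  have hc : 0 < 1 + J := by linarith
  have hmono := strictMonoOn_mul_sub_log hc
  have hanti := strictAntiOn_mul_sub_log (1 + J)
  have hPc : P < (1 + J)⁻¹ := by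
    by_contra! hle
    exact (hmono hle (hle.trans hPQ.le) hPQ).ne (by simp only; linarith)
  have hcb : (1 + J)⁻¹ ≤ (1 - J)⁻¹ := inv_anti₀ (by linarith) (by linarith)
  rw [one_div] at hQ
  have hbQ := hmono hcb (hcb.trans hQ.le) hQ
  have hab := log_one_add_three_mul_sub_log_one_sub_lt hJ0 hJ1
  have hac : (1 + 3 * J)⁻¹ ∈ Ioc 0 (1 + J)⁻¹ :=
    ⟨by positivity, inv_anti₀ hc (by linarith)⟩
  have hPa : P < (1 + 3 * J)⁻¹ := by
    refine (hanti.lt_iff_gt hac ⟨hP, hPc.le⟩).1 ?_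
    simp only [log_inv] at hbQ ⊢
    linarith
  have hinv : 1 + 3 * J < P⁻¹ := by
    simpa using inv_strictAnti₀ hP hPa
  rw [one_div, one_div]
  exact ⟨by linarith, hPa⟩
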